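/- arXiv:1004.2968 — 8 statements merged into one kernel-verified Lean document; each statement's English description precedes it below -/
import Mathlib

section
/- Let G be a graph with colored vertices such that no two vertices of the same color are adjacent in G, I an independent set in G, C a color class (set of all vertices of one color), and B the bipartite graph between I \ C and C \ I with edges inherited from G. If S ⊆ C \ I and S' = N_B(S) is the neighborhood of S in B, then (I \ S') ∪ S is an independent set in G. -/
/-- If `I` is an independent set in `G`, `C` a color class, `S ⊆ C \ I`, and
`S'` the neighborhood of `S` in the bipartite graph between `I \ C` and `C \ I`,
then `(I \ S') ∪ S` is an independent set, assuming no two vertices of the same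
color are adjacent. -/
theorem stmt1 {V Colors : Type*} (G : SimpleGraph V) (c : V → Colors)
    (hcol : ∀ u v, G.Adj u v → c u ≠ c v)
    (I : Set V) (hI : ∀ u ∈ I, ∀ v ∈ I, ¬ G.Adj u v)
    (γ : Colors) (S : Set V) (hS : S ⊆ {v | c v = γ} \ I) :
    ∀ u ∈ (I \ {a | a ∈ I \ {v | c v = γ} ∧ ∃ b ∈ S, G.Adj a b}) ∪ S,
    ∀ w ∈ (I \ {a | a ∈ I \ {v | c v = γ} ∧ ∃ b ∈ S, G.Adj a b}) ∪ S,
      ¬ G.Adj u w := by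
  have key : ∀ u, u ∈ I \ {a | a ∈ I \ {v | c v = γ} ∧ ∃ b ∈ S, G.Adj a b} →
      ∀ w ∈ S, ¬ G.Adj u w := by
    rintro u ⟨huI, hu'⟩ w hwS hadj
    by_cases hγ : c u = γ
    · exact hcol u w hadj (hγ.trans (hS hwS).1.symm)
    · exact hu' ⟨⟨huI, hγ⟩, w, hwS, hadj⟩
  rintro u (hu | hu) w (hw | hw) hadj
  · exact hI u hu.1 w hw.1 hadj
  · exact key u hu w hw hadj
  · exact key w hw u hu hadj.symm
  · exact hcol u w hadj ((hS hu).1.trans (hS hw).1.symm)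
end

section
/- Given n points each assigned a color, there exists a partition of all points into clusters such that each cluster has at least ℓ points and all points within each cluster have pairwise distinct colors, if and only if every color is used by at most ⌊n/ℓ⌋ points. -/
/-!
A colour class meets every cluster at most once, so it has at most as many points as there are
clusters, and there are at most `⌊n/ℓ⌋` clusters of size `≥ ℓ`.

Conversely, let `k = ⌊n/ℓ⌋`, list the points so that every colour class is contiguous, and put the
`i`-th point into cluster `i mod k`. Each residue class mod `k` below `n` has at least
`⌊n/k⌋ ≥ ℓ` elements, and two points of one colour in the same cluster would lie at distance
`≥ k` in the list, so the contiguous colour class between them would have more than `k` points.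
-/

open Finset

namespace Finpartition

variable {α β : Type*} [DecidableEq α] {s : Finset α} (P : Finpartition s)

theorem card_parts_mul_le_card {ℓ : ℕ} (h : ∀ p ∈ P.parts, ℓ ≤ #p) : #P.parts * ℓ ≤ #s :=
  calc #P.parts * ℓ = ∑ _p ∈ P.parts, ℓ := by rw [sum_const, smul_eq_mul]
    _ ≤ ∑ p ∈ P.parts, #p := sum_le_sum h
    _ = #s := P.sum_card_parts

theorem card_filter_le_card_parts {c : α → β} [DecidableEq β] (h : ∀ p ∈ P.parts, Set.InjOn c p)
    (γ : β) : #{a ∈ s | c a = γ} ≤ #P.parts := by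
  refine card_le_card_of_injOn P.part (fun a ha => P.part_mem.2 (mem_filter.1 ha).1) ?_
  intro u hu v hv huv
  simp only [coe_filter, Set.mem_ofPred_eq] at hu hv
  have hu' : u ∈ P.part v := huv ▸ P.mem_part_self.2 hu.1
  exact h _ (P.part_mem.2 hv.1) hu' (P.mem_part_self.2 hv.1) (hu.2.trans hv.2.symm)

end Finpartition

theorem Fin.card_filter_eq_count (n : ℕ) (p : ℕ → Prop) [DecidablePred p] :
    #{i : Fin n | p i} = n.count p := by
  rw [Nat.count_eq_card_filter_range]
  refine card_bij (fun i _ => i.val) (by simp) (fun _ _ _ _ => Fin.ext) fun b hb => ?_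
  rw [mem_filter, mem_range] at hb
  exact ⟨⟨b, hb.1⟩, by simpa using hb.2, rfl⟩

theorem Fin.div_le_card_filter_modEq {n k : ℕ} (hk : 0 < k) (v : ℕ) :
    n / k ≤ #{i : Fin n | (i : ℕ) ≡ v [MOD k]} := by
  rw [Fin.card_filter_eq_count n (· ≡ v [MOD k]), Nat.count_modEq_card n hk]
  exact Nat.le_add_right _ _

theorem Fin.eq_of_modEq_of_ordConnected {β : Type*} [DecidableEq β] {n k : ℕ} {d : Fin n → β}
    (hd : ∀ γ, (d ⁻¹' {γ}).OrdConnected) (hk : ∀ γ, #{i | d i = γ} ≤ k) {i j : Fin n}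
    (hij : (i : ℕ) ≡ j [MOD k]) (h : d i = d j) : i = j := by
  wlog hle : i ≤ j generalizing i j
  · exact (this hij.symm h.symm (le_of_not_ge hle)).symm
  by_contra hne
  have hlt : (i : ℕ) < j := Fin.lt_def.1 (lt_of_le_of_ne hle hne)
  have hkij : k ≤ j - i := Nat.le_of_dvd (by omega) ((Nat.modEq_iff_dvd' hle).1 hij)
  have hIcc : Icc i j ⊆ ({l | d l = d i} : Finset _) := fun l hl => by
    simpa using (hd (d i)).out rfl h.symm (mem_Icc.1 hl)
  have := (card_le_card hIcc).trans (hk (d i))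
  rw [Fin.card_Icc] at this
  omega

theorem Fintype.exists_equivFin_ordConnected_fiber {V β : Type*} [Fintype V] (c : V → β) :
    ∃ σ : V ≃ Fin (Fintype.card V), ∀ γ, (c ∘ σ.symm ⁻¹' {γ}).OrdConnected := by
  let : LinearOrder β := IsWellOrder.linearOrder WellOrderingRel
  let e := Fintype.equivFin V
  let : LinearOrder V := LinearOrder.lift' (fun v => toLex (c v, e v))
    fun u v h => e.injective (congrArg (fun p => (ofLex p).2) h)
  let φ : Fin (Fintype.card V) ≃o V := monoEquivOfFin V rfl
  have hc : Monotone c := fun u v huv => Prod.Lex.monotone_fst _ _ huv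
  exact ⟨φ.symm.toEquiv, fun γ => Set.ordConnected_singleton.preimage_mono (hc.comp φ.monotone)⟩

theorem exists_finpartition_injOn_of_card_fiber_le {V β : Type*} [Fintype V] [DecidableEq V]
    [DecidableEq β] (c : V → β) {k ℓ : ℕ} (hkℓ : k * ℓ ≤ Fintype.card V)
    (hc : ∀ γ, #{v | c v = γ} ≤ k) :
    ∃ P : Finpartition (univ : Finset V), ∀ p ∈ P.parts, ℓ ≤ #p ∧ Set.InjOn c p := by
  classical
  obtain ⟨σ, hσ⟩ := Fintype.exists_equivFin_ordConnected_fiber c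
  let P := Finpartition.ofSetoid (Setoid.ker fun v => (σ v : ℕ) % k)
  have hP : ∀ a v, v ∈ P.part a ↔ (σ v : ℕ) ≡ σ a [MOD k] := fun a v =>
    Finpartition.mem_part_ofSetoid_iff_rel.trans eq_comm
  refine ⟨P, fun p hp => ?_⟩
  obtain ⟨a, -, rfl⟩ := P.part_surjOn hp
  constructor
  · have hk : 0 < k := (card_pos.2 ⟨a, by simp⟩).trans_le (hc (c a))
    calc ℓ ≤ Fintype.card V / k := (Nat.le_div_iff_mul_le hk).2 (by rwa [mul_comm])
      _ ≤ #{i : Fin _ | (i : ℕ) ≡ σ a [MOD k]} := Fin.div_le_card_filter_modEq hk _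
      _ = #(P.part a) := card_equiv σ.symm fun i => by simp [hP]
  · intro u hu v hv huv
    have hfiber : ∀ γ, #{i | (c ∘ σ.symm) i = γ} ≤ k := fun γ =>
      (card_equiv σ.symm fun i => by simp).le.trans (hc γ)
    exact σ.injective <| Fin.eq_of_modEq_of_ordConnected hσ hfiber
      (((hP a u).1 hu).trans ((hP a v).1 hv).symm) (by simpa using huv)

theorem stmt2_general {V Colors : Type*} [Fintype V] [DecidableEq V] [DecidableEq Colors]
    (c : V → Colors) (ℓ : ℕ) (hℓ : 1 ≤ ℓ) :
    (∃ P : Finpartition (Finset.univ : Finset V),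
        ∀ p ∈ P.parts, ℓ ≤ p.card ∧ Set.InjOn c ↑p) ↔
      ∀ γ : Colors,
        (Finset.univ.filter (fun v => c v = γ)).card ≤ Fintype.card V / ℓ := by
  constructor
  · rintro ⟨P, hP⟩ γ
    rw [Nat.le_div_iff_mul_le hℓ]
    calc #{v | c v = γ} * ℓ ≤ #P.parts * ℓ :=
          Nat.mul_le_mul_right ℓ (P.card_filter_le_card_parts (fun p hp => (hP p hp).2) γ)
      _ ≤ Fintype.card V := P.card_parts_mul_le_card fun p hp => (hP p hp).1
  · exact exists_finpartition_injOn_of_card_fiber_le c (Nat.div_mul_le_self _ ℓ)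

/-- A feasible `ℓ`-diverse clustering of `n` colored points (all parts of size
at least `ℓ`, all colors distinct within each part) exists iff every color is
used by at most `⌊n/ℓ⌋` points. -/
theorem stmt2 {V Colors : Type*} [Fintype V] [DecidableEq V] [DecidableEq Colors]
    (c : V → Colors) (ℓ : ℕ) (hℓ : 1 ≤ ℓ) (hn : ℓ ≤ Fintype.card V) :
    (∃ P : Finpartition (Finset.univ : Finset V),
        ∀ p ∈ P.parts, ℓ ≤ p.card ∧ Set.InjOn c ↑p) ↔
      ∀ γ : Colors,
        (Finset.univ.filter (fun v => c v = γ)).card ≤ Fintype.card V / ℓ :=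
  stmt2_general c ℓ hℓ
end

section
/- Let C with |C| = m be the largest color class among n colored points, and suppose m ≤ ⌊n/ℓ⌋. If points are distributed into m clusters by processing color classes one at a time, always placing each point into a currently smallest cluster not yet containing its color, then at every moment the sizes of any two clusters differ by at most one. -/
open Finset

/-- If the largest color class has size `m ≤ ⌊n/ℓ⌋` and the points are
distributed into `m` clusters by processing color classes one at a time
(so same-colored points are consecutive in the processing order), each point
going into a currently smallest cluster not containing its color, then at every
moment the sizes of any two clusters differ by at most one. -/
theorem stmt3 {V Colors : Type*} [Fintype V] [DecidableEq V] [DecidableEq Colors]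
    (c : V → Colors) (ℓ m : ℕ) (hℓ : 1 ≤ ℓ) (hm0 : 0 < m)
    (hm : ∀ γ : Colors, (Finset.univ.filter (fun v => c v = γ)).card ≤ m)
    (hmax : ∃ γ : Colors, (Finset.univ.filter (fun v => c v = γ)).card = m)
    (hfeas : m ≤ Fintype.card V / ℓ)
    (n : ℕ) (hn : n = Fintype.card V)
    (order : Fin n → V) (horder : Function.Bijective order)
    (hgrouped : ∀ i j k : Fin n, i < j → j < k →
      c (order i) = c (order k) → c (order i) = c (order j))
    (σ : Fin (n + 1) → Fin m → Finset V)
    (hσ0 : ∀ j, σ 0 j = ∅)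
    (hstep : ∀ i : Fin n, ∃ j : Fin m,
      (∀ u ∈ σ i.castSucc j, c u ≠ c (order i)) ∧
      (∀ j' : Fin m, (∀ u ∈ σ i.castSucc j', c u ≠ c (order i)) →
        (σ i.castSucc j).card ≤ (σ i.castSucc j').card) ∧
      σ i.succ j = insert (order i) (σ i.castSucc j) ∧
      ∀ j' : Fin m, j' ≠ j → σ i.succ j' = σ i.castSucc j') :
    ∀ (t : Fin (n + 1)) (j j' : Fin m), (σ t j).card ≤ (σ t j').card + 1 := by
  suffices H : ∀ t (ht : t ≤ n),
      (∀ j j' : Fin m, (σ ⟨t, Nat.lt_succ_of_le ht⟩ j).card ≤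
        (σ ⟨t, Nat.lt_succ_of_le ht⟩ j').card + 1) ∧
      (∀ j : Fin m, ∀ v ∈ σ ⟨t, Nat.lt_succ_of_le ht⟩ j,
        ∃ i' : Fin n, (i' : ℕ) < t ∧ order i' = v) ∧
      (∀ (ht' : t < n), ∀ j j' : Fin m,
        (∀ u ∈ σ ⟨t, Nat.lt_succ_of_le ht⟩ j, c u ≠ c (order ⟨t, ht'⟩)) →
        (∃ u ∈ σ ⟨t, Nat.lt_succ_of_le ht⟩ j', c u = c (order ⟨t, ht'⟩)) →
        (σ ⟨t, Nat.lt_succ_of_le ht⟩ j).card ≤ (σ ⟨t, Nat.lt_succ_of_le ht⟩ j').card) by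
    intro t j j'
    have ht : (t : ℕ) ≤ n := Nat.lt_succ_iff.mp t.isLt
    have := (H t ht).1 j j'
    have heq : (⟨(t : ℕ), Nat.lt_succ_of_le ht⟩ : Fin (n + 1)) = t := Fin.ext rfl
    rwa [heq] at this
  intro t
  induction t with
  | zero =>
    intro ht
    refine ⟨?_, ?_, ?_⟩
    · intro j j'; simp [hσ0]
    · intro j v hv; simp [hσ0] at hv
    · intro ht' j j' _ hj'
      obtain ⟨u, hu, _⟩ := hj'
      simp [hσ0] at hu
  | succ t ih =>
    intro ht
    have ht' : t < n := ht
    obtain ⟨A, B, Cc⟩ := ih (le_of_lt ht')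
    set i : Fin n := ⟨t, ht'⟩ with hi
    obtain ⟨j0, hfree, hmin, hins, hoth⟩ := hstep i
    have hcs : i.castSucc = (⟨t, Nat.lt_succ_of_le (le_of_lt ht')⟩ : Fin (n + 1)) :=
      Fin.ext rfl
    have hsu : i.succ = (⟨t + 1, Nat.lt_succ_of_le ht⟩ : Fin (n + 1)) := Fin.ext rfl
    rw [hcs] at hfree hmin hins hoth
    rw [hsu] at hins hoth
    set told : Fin (n + 1) := ⟨t, Nat.lt_succ_of_le (le_of_lt ht')⟩ with htold
    set tnew : Fin (n + 1) := ⟨t + 1, Nat.lt_succ_of_le ht⟩ with htnew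
    -- the new point is not already in cluster j0
    have hnotmem : order i ∉ σ told j0 := by
      intro hmem
      obtain ⟨i', hi'lt, hi'eq⟩ := B j0 (order i) hmem
      have : i' = i := horder.injective hi'eq
      rw [this] at hi'lt
      simp [hi] at hi'lt
    have hcard : (σ tnew j0).card = (σ told j0).card + 1 := by
      rw [hins, Finset.card_insert_of_notMem hnotmem]
    -- j0 is minimal among ALL clusters
    have hminAll : ∀ j' : Fin m, (σ told j0).card ≤ (σ told j').card := by
      intro j'
      by_cases hc : ∀ u ∈ σ told j', c u ≠ c (order i)
      · exact hmin j' hc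
      · push_neg at hc
        exact Cc ht' j0 j' hfree hc
    refine ⟨?_, ?_, ?_⟩
    · -- balance at t+1
      intro j j'
      by_cases hj : j = j0
      · rw [hj]
        by_cases hj' : j' = j0
        · rw [hj']; omega
        · rw [hoth j' hj', hcard]
          exact Nat.add_le_add_right (hminAll j') 1
      · rw [hoth j hj]
        by_cases hj' : j' = j0
        · rw [hj', hcard]
          have := A j j0
          omega
        · rw [hoth j' hj']; exact A j j'
    · -- membership at t+1
      intro j v hv
      by_cases hj : j = j0
      · rw [hj] at hv
        rw [hins] at hv
        rcases Finset.mem_insert.mp hv with h | h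
        · exact ⟨i, by simp [hi], h.symm⟩
        · obtain ⟨i', hi'lt, hi'eq⟩ := B j0 v h
          exact ⟨i', Nat.lt_succ_of_lt hi'lt, hi'eq⟩
      · rw [hoth j hj] at hv
        obtain ⟨i', hi'lt, hi'eq⟩ := B j v hv
        exact ⟨i', Nat.lt_succ_of_lt hi'lt, hi'eq⟩
    · -- free ≤ containing, for next color
      intro ht2 j j' hjfree hj'cont
      obtain ⟨u, hu, hcu⟩ := hj'cont
      set inext : Fin n := ⟨t + 1, ht2⟩ with hinext
      by_cases hγ : c (order inext) = c (order i)
      · -- same color as current step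
        have hjne : j ≠ j0 := by
          intro h
          have hmem : order i ∈ σ tnew j0 := by rw [hins]; exact Finset.mem_insert_self _ _
          rw [← h] at hmem
          exact hjfree (order i) hmem hγ.symm
        rw [hoth j hjne]
        have hjfree' : ∀ u ∈ σ told j, c u ≠ c (order i) := by
          intro u hu hcu
          exact hjfree u (by rw [hoth j hjne]; exact hu) (by rw [hcu, hγ])
        by_cases hj' : j' = j0
        · rw [hj', hcard]
          have := A j j0
          omega
        · rw [hoth j' hj']
          rw [hoth j' hj'] at hu
          exact Cc ht' j j' hjfree' ⟨u, hu, by rw [hcu, hγ]⟩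
      · -- new color: no cluster can contain it yet, contradiction
        exfalso
        -- u ∈ σ tnew j', so u = order i'' for some i'' ≤ t
        have hu' : ∃ i'' : Fin n, (i'' : ℕ) < t + 1 ∧ order i'' = u := by
          by_cases hj' : j' = j0
          · rw [hj'] at hu
            rw [hins] at hu
            rcases Finset.mem_insert.mp hu with h | h
            · exact ⟨i, by simp [hi], h.symm⟩
            · obtain ⟨i'', h1, h2⟩ := B j0 u h
              exact ⟨i'', Nat.lt_succ_of_lt h1, h2⟩
          · rw [hoth j' hj'] at hu
            obtain ⟨i'', h1, h2⟩ := B j' u hu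
            exact ⟨i'', Nat.lt_succ_of_lt h1, h2⟩
        obtain ⟨i'', hi''lt, hi''eq⟩ := hu'
        rcases Nat.lt_succ_iff_lt_or_eq.mp hi''lt with h | h
        · -- i'' < t = i < inext, same color as inext: grouped forces color = c (order i)
          have h1 : i'' < i := by simpa [hi, Fin.lt_def] using h
          have h2 : i < inext := by simp [hi, hinext, Fin.lt_def]
          have h3 : c (order i'') = c (order inext) := by rw [hi''eq, hcu]
          have := hgrouped i'' i inext h1 h2 h3
          rw [this] at h3
          exact hγ h3.symm
        · -- i'' = i : then c u = c (order i) ≠ c (order inext)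
          have : i'' = i := Fin.ext (by simpa [hi] using h)
          rw [this] at hi''eq
          rw [← hi''eq] at hcu
          exact hγ hcu.symm
end

section
/- Let C₁, …, C_k be the color classes of n colored points sorted so that |C₁| ≥ |C₂| ≥ … ≥ |C_k|, and let p be the maximum integer with Σᵢ min(p, |Cᵢ|) ≥ pℓ. Then with q = Σᵢ max(0, |Cᵢ| − p), the remaining n − q points (after deleting max(0, |Cᵢ| − p) points from each Cᵢ) satisfy the feasibility condition: every color occurs at most ⌊(n−q)/ℓ⌋ times, so they admit an ℓ-diverse clustering. -/
open Finset

/-- With color class sizes `a₁ ≥ … ≥ a_k`, `p` the maximum integer with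
`Σᵢ min(p,aᵢ) ≥ pℓ`, and `q = Σᵢ max(0, aᵢ − p)`, the remaining `n − q` points
(after deleting `max(0, aᵢ − p)` points from each class) satisfy the
feasibility condition: every color occurs at most `⌊(n−q)/ℓ⌋` times. -/
theorem stmt4 (k : ℕ) (a : Fin k → ℕ) (hpos : ∀ i, 0 < a i)
    (hsorted : ∀ i j : Fin k, i ≤ j → a j ≤ a i)
    (ℓ : ℕ) (hℓ : 1 ≤ ℓ) (p : ℕ) (hp : 1 ≤ p)
    (hpmax1 : p * ℓ ≤ ∑ i, min p (a i))
    (hpmax2 : ∀ p' : ℕ, p < p' → ∑ i, min p' (a i) < p' * ℓ) :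
    ∀ i : Fin k,
      a i - (a i - p) ≤ ((∑ i, a i) - ∑ i, (a i - p)) / ℓ := by
  intro i
  have hsum : (∑ i, a i) - ∑ i, (a i - p) = ∑ i, min p (a i) := by
    rw [← Finset.sum_tsub_distrib]
    · exact Finset.sum_congr rfl (fun j _ => by omega)
    · intro j _; omega
  rw [hsum]
  have h1 : a i - (a i - p) ≤ p := by omega
  have h2 : p ≤ (∑ i, min p (a i)) / ℓ :=
    (Nat.le_div_iff_mul_le (by omega)).mpr hpmax1
  omega
end

section
/- For any connected graph G on n ≥ 3 vertices, the cube G³ (the graph on the same vertex set where u and v are adjacent iff their distance in G is at most 3 and u ≠ v) contains a Hamiltonian cycle. -/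
/-!
The cube of a connected finite graph is Hamiltonian-connected, by induction on the number of
vertices. Given `r ≠ w`, let `C` be the component of `w` in `G - r`; both `C` and its complement
`D ∋ r` induce connected graphs, and `r` has a neighbour `c ∈ C`. By induction `D³` has a
Hamiltonian path from `r` to some `a` with `dist r a ≤ 1`, and `C³` one from some `b` with
`dist c b ≤ 1` to `w`. As `dist a b ≤ 3`, the two paths join into a Hamiltonian `r`–`w` path
of `G³`. With at least three vertices, a Hamiltonian path between the ends of an edge closes to
a Hamiltonian cycle.
-/

open Function SimpleGraph

namespace SimpleGraph

variable {V V₁ V₂ W : Type*} {G : SimpleGraph V}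

/-- `dist` is `0` between vertices in different components, so this is the usual `k`-th power
only for connected graphs. -/
def power (G : SimpleGraph V) (k : ℕ) : SimpleGraph V where
  Adj u v := u ≠ v ∧ G.dist u v ≤ k
  symm := ⟨fun _ _ h => ⟨h.1.symm, dist_comm.trans_le h.2⟩⟩
  loopless := ⟨fun _ h => h.1 rfl⟩

@[simp]
lemma power_adj {k : ℕ} {u v : V} : (G.power k).Adj u v ↔ u ≠ v ∧ G.dist u v ≤ k := Iff.rfl

lemma Reachable.dist_map_le {G' : SimpleGraph W} (f : G →g G') {u v : V} (h : G.Reachable u v) :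
    G'.dist (f u) (f v) ≤ G.dist u v := by
  obtain ⟨p, hp⟩ := h.exists_walk_length_eq_dist
  exact hp ▸ (dist_le (p.map f)).trans_eq (p.length_map f)

def Hom.power {G' : SimpleGraph W} (f : G →g G') (hf : Injective f) (hG : G.Preconnected)
    (k : ℕ) : G.power k →g G'.power k where
  toFun := f
  map_rel' {u v} h := power_adj.mpr ⟨hf.ne h.1, ((hG u v).dist_map_le f).trans h.2⟩

lemma Preconnected.dist_le_dist_induce {s : Set V} (hs : (G.induce s).Preconnected) (x y : s) :
    G.dist x y ≤ (G.induce s).dist x y :=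
  (hs x y).dist_map_le (Embedding.induce s).toHom

/-- For `r ≠ w`, the vertex set of the component of `w` in `G - r`. -/
def reachableAvoiding (G : SimpleGraph V) (r w : V) : Set V :=
  {x | ∃ p : G.Walk x w, r ∉ p.support}

section reachableAvoiding

variable {r w : V}

lemma mem_reachableAvoiding (h : r ≠ w) : w ∈ G.reachableAvoiding r w :=
  ⟨.nil, by simpa using h⟩

lemma notMem_reachableAvoiding : r ∉ G.reachableAvoiding r w :=
  fun ⟨p, hp⟩ => hp p.start_mem_support

lemma connected_induce_reachableAvoiding (h : r ≠ w) :
    (G.induce (G.reachableAvoiding r w)).Connected := by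
  classical
  refine induce_connected_of_patches w (mem_reachableAvoiding h) fun {v} ⟨p, hp⟩ => ?_
  refine ⟨{x | x ∈ p.support}, fun y hy => ?_, p.end_mem_support, p.start_mem_support,
    p.connected_induce_support.preconnected _ _⟩
  exact ⟨p.dropUntil y hy, fun hr => hp (p.support_dropUntil_subset_support hy hr)⟩

lemma Connected.connected_induce_compl_reachableAvoiding (hG : G.Connected) :
    (G.induce (G.reachableAvoiding r w)ᶜ).Connected := by
  classical
  refine induce_connected_of_patches r notMem_reachableAvoiding fun {v} hv => ?_
  obtain ⟨p⟩ := hG.preconnected v w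
  have hr : r ∈ p.support := by
    by_contra hr
    exact hv ⟨p, hr⟩
  refine ⟨{x | x ∈ (p.takeUntil r hr).support}, fun y hy => ?_, Walk.end_mem_support _,
    Walk.start_mem_support _, Walk.connected_induce_support _ |>.preconnected _ _⟩
  rintro ⟨p', hp'⟩
  obtain rfl | hyr := eq_or_ne y r
  · exact hp' p'.start_mem_support
  refine hv ⟨(p.takeUntil y (p.support_takeUntil_subset_support hr hy)).append p', fun hr' => ?_⟩
  rw [Walk.mem_support_append_iff] at hr'
  exact hr'.elim (Walk.notMem_support_takeUntil_support_takeUntil_subset hyr hr hy) hp'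

lemma Connected.exists_adj_mem_reachableAvoiding (hG : G.Connected) (h : r ≠ w) :
    ∃ c ∈ G.reachableAvoiding r w, G.Adj r c := by
  obtain ⟨p, hp⟩ := hG.preconnected.exists_isPath r w
  cases p with
  | nil => exact absurd rfl h
  | cons hadj q => exact ⟨_, ⟨q, ((Walk.cons_isPath_iff _ _).mp hp).2⟩, hadj⟩

end reachableAvoiding

variable [DecidableEq V]

def IsHamiltonianConnected (G : SimpleGraph V) : Prop :=
  ∀ ⦃u v : V⦄, u ≠ v → ∃ p : G.Walk u v, p.IsHamiltonian

namespace Walk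

variable {u v : V}

lemma IsHamiltonian.reverse {p : G.Walk u v} (hp : p.IsHamiltonian) : p.reverse.IsHamiltonian :=
  fun x => by rw [support_reverse, List.count_reverse]; exact hp x

lemma IsHamiltonian.isHamiltonianCycle_cons {p : G.Walk v u} (hp : p.IsHamiltonian)
    (h : G.Adj u v) (hlen : p.length ≠ 1) : (cons h p).IsHamiltonianCycle := by
  refine isHamiltonianCycle_iff_isCycle_and_support_count_tail_eq_one.mpr ⟨?_, hp⟩
  refine (cons_isCycle_iff p h).mpr ⟨hp.isPath, fun he => hlen ?_⟩
  exact hp.isPath.length_eq_one_of_mem_edges (Sym2.eq_swap ▸ he)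

variable [DecidableEq V₁] [DecidableEq V₂] {G₁ : SimpleGraph V₁} {G₂ : SimpleGraph V₂}

lemma IsHamiltonian.append_cons_map (f₁ : G₁ →g G) (f₂ : G₂ →g G) (hf₁ : Injective f₁)
    (hf₂ : Injective f₂) (hf : IsCompl (Set.range f₁) (Set.range f₂)) {a b : V₁} {c d : V₂}
    {p : G₁.Walk a b} {q : G₂.Walk c d} (hp : p.IsHamiltonian) (hq : q.IsHamiltonian)
    (h : G.Adj (f₁ b) (f₂ c)) : ((p.map f₁).append (cons h (q.map f₂))).IsHamiltonian := by
  intro x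
  rw [support_append, support_cons, List.tail_cons, support_map, support_map, List.count_append]
  rcases Set.eq_univ_iff_forall.mp hf.sup_eq_top x with ⟨y, rfl⟩ | ⟨y, rfl⟩
  · have hy : f₁ y ∉ Set.range f₂ := Set.disjoint_left.mp hf.disjoint ⟨y, rfl⟩
    rw [List.count_map_of_injective _ _ hf₁, hp y, List.count_eq_zero.mpr]
    simpa using fun z _ hz => hy ⟨z, hz⟩
  · have hy : f₂ y ∉ Set.range f₁ := Set.disjoint_right.mp hf.disjoint ⟨y, rfl⟩
    rw [List.count_map_of_injective _ _ hf₂, hq y, List.count_eq_zero.mpr]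
    simpa using fun z _ hz => hy ⟨z, hz⟩

end Walk

lemma IsHamiltonianConnected.isHamiltonian [Fintype V] (hG : G.IsHamiltonianConnected)
    (hV : 3 ≤ Fintype.card V) : G.IsHamiltonian := by
  intro _
  obtain ⟨u, v, huv⟩ := Fintype.exists_pair_of_one_lt_card (by omega : 1 < Fintype.card V)
  obtain ⟨p, -⟩ := hG huv
  have hadj : G.Adj u p.snd := p.adj_snd (Walk.not_nil_of_ne huv)
  obtain ⟨q, hq⟩ := hG hadj.ne.symm
  exact ⟨u, .cons hadj q, hq.isHamiltonianCycle_cons hadj (by rw [hq.length_eq]; omega)⟩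

lemma IsHamiltonianConnected.exists_dist_le_one_isHamiltonian {U : Type*} [DecidableEq U]
    {K L : SimpleGraph U} (hL : L.IsHamiltonianConnected) (hK : K.Preconnected) (x t : U) :
    ∃ s, K.dist x s ≤ 1 ∧ ∃ p : L.Walk s t, p.IsHamiltonian := by
  obtain hxt | rfl := ne_or_eq x t
  · exact ⟨x, dist_self.le.trans zero_le_one, hL hxt⟩
  obtain _ | _ := subsingleton_or_nontrivial U
  · exact ⟨x, dist_self.le.trans zero_le_one, .nil, Walk.IsHamiltonian.of_subsingleton⟩
  obtain ⟨s, hs⟩ := hK.exists_adj_of_nontrivial x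
  exact ⟨s, (dist_eq_one_iff_adj.mpr hs).le, hL hs.ne.symm⟩

theorem Connected.isHamiltonianConnected_power_three [Finite V] (hG : G.Connected) :
    (G.power 3).IsHamiltonianConnected := by
  induction hn : Nat.card V using Nat.strong_induction_on generalizing V with
  | _ n ih =>
  intro r w hrw
  set C := G.reachableAvoiding r w
  have hwC : w ∈ C := mem_reachableAvoiding hrw
  have hrC : r ∉ C := notMem_reachableAvoiding
  have hC : (G.induce C).Connected := connected_induce_reachableAvoiding hrw
  have hD : (G.induce Cᶜ).Connected := hG.connected_induce_compl_reachableAvoiding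
  obtain ⟨c, hcC, hrc⟩ := hG.exists_adj_mem_reachableAvoiding hrw
  obtain ⟨a, hra, p, hp⟩ := (ih _ (hn ▸ Finite.card_subtype_lt (not_not.mpr hwC)) hD rfl)
    |>.exists_dist_le_one_isHamiltonian hD.preconnected ⟨r, hrC⟩ ⟨r, hrC⟩
  obtain ⟨b, hcb, q, hq⟩ := (ih _ (hn ▸ Finite.card_subtype_lt hrC) hC rfl)
    |>.exists_dist_le_one_isHamiltonian hC.preconnected ⟨c, hcC⟩ ⟨w, hwC⟩
  have hab : (G.power 3).Adj a b := by
    refine ⟨fun h => a.2 (h ▸ b.2), ?_⟩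
    have har : G.dist a r ≤ 1 :=
      dist_comm.trans_le <| (hD.preconnected.dist_le_dist_induce _ _).trans hra
    have hcb' : G.dist c b ≤ 1 := (hC.preconnected.dist_le_dist_induce _ _).trans hcb
    have hrc' : G.dist r c = 1 := dist_eq_one_iff_adj.mpr hrc
    have := hG.dist_triangle (u := (a : V)) (v := r) (w := b)
    have := hG.dist_triangle (u := r) (v := c) (w := b)
    omega
  have hrange (s : Set V) (hs : (G.induce s).Preconnected) : Set.range
      ((Embedding.induce s).toHom.power Subtype.val_injective hs 3) = s := Subtype.range_coe
  exact ⟨_, hp.reverse.append_cons_map _ _ Subtype.val_injective Subtype.val_injective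
    (by rw [hrange _ hD.preconnected, hrange _ hC.preconnected]; exact isCompl_compl.symm) hq hab⟩

end SimpleGraph

/-- For any connected graph `G` on `n ≥ 3` vertices, the cube `G³` (vertices
`u ≠ v` adjacent iff their distance in `G` is at most `3`) contains a
Hamiltonian cycle. -/
theorem stmt8 {V : Type*} [Fintype V] [DecidableEq V] (G : SimpleGraph V)
    (hconn : G.Connected) (hcard : 3 ≤ Fintype.card V) :
    ∃ (a : V) (p : (SimpleGraph.mk (fun u v => u ≠ v ∧ G.dist u v ≤ 3)
        ⟨fun u v h => ⟨h.1.symm, by rw [SimpleGraph.dist_comm]; exact h.2⟩⟩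
        ⟨fun u h => h.1 rfl⟩).Walk a a),
      p.IsHamiltonianCycle :=
  hconn.isHamiltonianConnected_power_three.isHamiltonian hcard (by omega)
end

section
/- Let B = (X, Y, E) be a finite bipartite graph and M a matching in B. If B has a matching saturating Y, then there exists a maximum matching M* of B such that every vertex of X matched by M is also matched by M*. -/
/-- `M` is a matching of the bipartite graph with parts `X`, `Y` and edge
relation `E`: every pair of `M` is an edge, and no two pairs share an
endpoint. -/
def IsBipMatching {X Y : Type*} (E : X → Y → Prop) (M : Finset (X × Y)) : Prop :=
  (∀ p ∈ M, E p.1 p.2) ∧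
  (∀ p ∈ M, ∀ q ∈ M, p.1 = q.1 → p = q) ∧
  (∀ p ∈ M, ∀ q ∈ M, p.2 = q.2 → p = q)

open Finset

namespace Stmt10Aux

set_option linter.unusedSectionVars false

variable {X Y : Type*} [Fintype X] [Fintype Y] [DecidableEq X] [DecidableEq Y]

noncomputable def pathSeq (M N : Finset (X × Y)) (hsatN : ∀ y : Y, ∃ x : X, (x, y) ∈ N)
    (x0 : X) : ℕ → X
  | 0 => x0
  | n + 1 =>
      if h : ∃ y, ((pathSeq M N hsatN x0 n), y) ∈ M then (hsatN h.choose).choose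
      else pathSeq M N hsatN x0 n

lemma pathSeq_zero (M N : Finset (X × Y)) (hsatN : ∀ y : Y, ∃ x : X, (x, y) ∈ N) (x0 : X) :
    pathSeq M N hsatN x0 0 = x0 := rfl

lemma pathSeq_succ (M N : Finset (X × Y)) (hsatN : ∀ y : Y, ∃ x : X, (x, y) ∈ N) (x0 : X)
    (n : ℕ) (h : ∃ y, ((pathSeq M N hsatN x0 n), y) ∈ M) :
    pathSeq M N hsatN x0 (n + 1) = (hsatN h.choose).choose := by
  rw [pathSeq, dif_pos h]

lemma augment (E : X → Y → Prop) (M N : Finset (X × Y)) (hM : IsBipMatching E M)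
    (hN : IsBipMatching E N) (hsatN : ∀ y : Y, ∃ x : X, (x, y) ∈ N)
    (x0 : X) (hx0M : ∃ y, (x0, y) ∈ M) (hx0N : ¬ ∃ y, (x0, y) ∈ N) :
    ∃ N' : Finset (X × Y), IsBipMatching E N' ∧ (∀ y : Y, ∃ x : X, (x, y) ∈ N') ∧
      (∃ y, (x0, y) ∈ N') ∧
      ∀ x : X, (∃ y, (x, y) ∈ M) → (∃ y, (x, y) ∈ N) → ∃ y, (x, y) ∈ N' := by
  classical
  set a : ℕ → X := pathSeq M N hsatN x0 with ha
  set yf : ℕ → Y := fun n => if h : ∃ y, (a n, y) ∈ M then h.choose else hx0M.choose with hyf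
  have ha0 : a 0 = x0 := rfl
  -- step spec
  have hstep : ∀ n, (∃ y, (a n, y) ∈ M) → (a n, yf n) ∈ M ∧ (a (n + 1), yf n) ∈ N := by
    intro n h
    have h1 : yf n = h.choose := by simp only [hyf, dif_pos h]
    have h2 : a (n + 1) = (hsatN h.choose).choose := pathSeq_succ M N hsatN x0 n h
    refine ⟨?_, ?_⟩
    · rw [h1]; exact h.choose_spec
    · rw [h1, h2]; exact (hsatN h.choose).choose_spec
  -- injectivity on the covered segment
  have hinj : ∀ j, (∀ m, m < j → ∃ y, (a m, y) ∈ M) →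
      ∀ i, ∀ i', i < i' → i' ≤ j → a i ≠ a i' := by
    intro j hcov i
    induction i with
    | zero =>
      intro i' hlt hle heq
      obtain ⟨n, rfl⟩ : ∃ n, i' = n + 1 := ⟨i' - 1, by omega⟩
      have hcn := hcov n (by omega)
      have := (hstep n hcn).2
      exact hx0N ⟨yf n, by rwa [← heq, ha0] at this⟩
    | succ i ih =>
      intro i' hlt hle heq
      obtain ⟨n, rfl⟩ : ∃ n, i' = n + 1 := ⟨i' - 1, by omega⟩
      have hci := hcov i (by omega)
      have hcn := hcov n (by omega)
      have e1 := (hstep i hci).2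
      have e2 := (hstep n hcn).2
      have hpq : ((a (i+1), yf i) : X × Y) = (a (n+1), yf n) :=
        hN.2.1 _ e1 _ e2 heq
      have hy : yf i = yf n := congrArg Prod.snd hpq
      have m1 := (hstep i hci).1
      have m2 := (hstep n hcn).1
      have hax : a i = a n :=
        congrArg Prod.fst (hM.2.2 _ m1 _ m2 hy)
      exact ih n (by omega) (by omega) hax
  -- termination
  have hterm : ∃ n, ¬ ∃ y, (a n, y) ∈ M := by
    by_contra hc
    push_neg at hc
    have hcard : (Finset.range (Fintype.card X + 1)).card ≤ (Finset.univ : Finset X).card := by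
      apply Finset.card_le_card_of_injOn a (fun _ _ => Finset.mem_univ _)
      intro i hi i' hi' heq
      by_contra hne
      rcases Nat.lt_or_ge i i' with h | h
      · exact hinj (Fintype.card X + 1) (fun m _ => hc m) i i' h
          (by have := Finset.mem_range.mp hi'; omega) heq
      · have h' : i' < i := by omega
        exact hinj (Fintype.card X + 1) (fun m _ => hc m) i' i h'
          (by have := Finset.mem_range.mp hi; omega) heq.symm
    simp [Finset.card_range, Finset.card_univ] at hcard
  set k := Nat.find hterm with hk
  have hkspec : ¬ ∃ y, (a k, y) ∈ M := Nat.find_spec hterm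
  have hklt : ∀ m, m < k → ∃ y, (a m, y) ∈ M := by
    intro m hm
    by_contra hc
    exact Nat.find_min hterm hm hc
  have hkpos : 0 < k := by
    rcases Nat.eq_zero_or_pos k with h | h
    · exact absurd (by rwa [← ha0] at hx0M) (h ▸ hkspec)
    · exact h
  have hainj : ∀ i, i ≤ k → ∀ i', i' ≤ k → a i = a i' → i = i' := by
    intro i hi i' hi' heq
    by_contra hne
    rcases Nat.lt_or_ge i i' with h | h
    · exact hinj k hklt i i' h hi' heq
    · exact hinj k hklt i' i (by omega) hi heq.symm
  have hyinj : ∀ i, i < k → ∀ i', i' < k → yf i = yf i' → i = i' := by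
    intro i hi i' hi' heq
    have m1 := (hstep i (hklt i hi)).1
    have m2 := (hstep i' (hklt i' hi')).1
    have := congrArg Prod.fst (hM.2.2 _ m1 _ m2 heq)
    exact hainj i (by omega) i' (by omega) this
  set P : Finset (X × Y) := (Finset.range k).image (fun i => (a i, yf i)) with hP
  set R : Finset (X × Y) := (Finset.range k).image (fun i => (a (i+1), yf i)) with hR
  set N' : Finset (X × Y) := (N \ R) ∪ P with hN'
  have hPmem : ∀ p, p ∈ P ↔ ∃ i, i < k ∧ p = (a i, yf i) := by
    intro p
    simp only [hP, Finset.mem_image, Finset.mem_range]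
    constructor
    · rintro ⟨i, hi, rfl⟩; exact ⟨i, hi, rfl⟩
    · rintro ⟨i, hi, rfl⟩; exact ⟨i, hi, rfl⟩
  have hRmem : ∀ p, p ∈ R ↔ ∃ i, i < k ∧ p = (a (i+1), yf i) := by
    intro p
    simp only [hR, Finset.mem_image, Finset.mem_range]
    constructor
    · rintro ⟨i, hi, rfl⟩; exact ⟨i, hi, rfl⟩
    · rintro ⟨i, hi, rfl⟩; exact ⟨i, hi, rfl⟩
  -- a P edge's x coordinate never occurs in N \ R
  have hPx : ∀ p ∈ N \ R, ∀ i, i < k → p.1 ≠ a i := by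
    rintro p hp i hi heq
    rw [Finset.mem_sdiff] at hp
    rcases Nat.eq_zero_or_pos i with rfl | hipos
    · exact hx0N ⟨p.2, by rw [← ha0, ← heq]; exact hp.1⟩
    · obtain ⟨m, rfl⟩ : ∃ m, i = m + 1 := ⟨i - 1, by omega⟩
      have e := (hstep m (hklt m (by omega))).2
      have : p = (a (m+1), yf m) := hN.2.1 _ hp.1 _ e heq
      exact hp.2 ((hRmem p).mpr ⟨m, by omega, this⟩)
  -- a P edge's y coordinate never occurs in N \ R
  have hPy : ∀ p ∈ N \ R, ∀ i, i < k → p.2 ≠ yf i := by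
    rintro p hp i hi heq
    rw [Finset.mem_sdiff] at hp
    have e := (hstep i (hklt i hi)).2
    have : p = (a (i+1), yf i) := hN.2.2 _ hp.1 _ e heq
    exact hp.2 ((hRmem p).mpr ⟨i, hi, this⟩)
  refine ⟨N', ⟨?_, ?_, ?_⟩, ?_, ?_, ?_⟩
  · -- edges
    intro p hp
    rcases Finset.mem_union.mp hp with h | h
    · exact hN.1 p (Finset.mem_sdiff.mp h).1
    · obtain ⟨i, hi, rfl⟩ := (hPmem p).mp h
      exact hM.1 _ (hstep i (hklt i hi)).1
  · -- x-disjoint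
    intro p hp q hq heq
    rcases Finset.mem_union.mp hp with h1 | h1 <;> rcases Finset.mem_union.mp hq with h2 | h2
    · exact hN.2.1 p (Finset.mem_sdiff.mp h1).1 q (Finset.mem_sdiff.mp h2).1 heq
    · obtain ⟨i, hi, rfl⟩ := (hPmem q).mp h2
      exact absurd heq (hPx p h1 i hi)
    · obtain ⟨i, hi, rfl⟩ := (hPmem p).mp h1
      exact absurd heq.symm (hPx q h2 i hi)
    · obtain ⟨i, hi, rfl⟩ := (hPmem p).mp h1
      obtain ⟨j, hj, rfl⟩ := (hPmem q).mp h2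
      have : i = j := hainj i (by omega) j (by omega) heq
      rw [this]
  · -- y-disjoint
    intro p hp q hq heq
    rcases Finset.mem_union.mp hp with h1 | h1 <;> rcases Finset.mem_union.mp hq with h2 | h2
    · exact hN.2.2 p (Finset.mem_sdiff.mp h1).1 q (Finset.mem_sdiff.mp h2).1 heq
    · obtain ⟨i, hi, rfl⟩ := (hPmem q).mp h2
      exact absurd heq (hPy p h1 i hi)
    · obtain ⟨i, hi, rfl⟩ := (hPmem p).mp h1
      exact absurd heq.symm (hPy q h2 i hi)
    · obtain ⟨i, hi, rfl⟩ := (hPmem p).mp h1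
      obtain ⟨j, hj, rfl⟩ := (hPmem q).mp h2
      have : i = j := hyinj i hi j hj heq
      rw [this]
  · -- saturates Y
    intro y
    by_cases h : ∃ i, i < k ∧ y = yf i
    · obtain ⟨i, hi, rfl⟩ := h
      exact ⟨a i, Finset.mem_union_right _ ((hPmem _).mpr ⟨i, hi, rfl⟩)⟩
    · obtain ⟨x, hx⟩ := hsatN y
      refine ⟨x, Finset.mem_union_left _ (Finset.mem_sdiff.mpr ⟨hx, ?_⟩)⟩
      intro hr
      obtain ⟨i, hi, he⟩ := (hRmem _).mp hr
      exact h ⟨i, hi, congrArg Prod.snd he⟩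
  · -- covers x0
    exact ⟨yf 0, Finset.mem_union_right _ ((hPmem _).mpr ⟨0, hkpos, by rw [ha0]⟩)⟩
  · -- preserves coverage of M-covered vertices
    rintro x hxM ⟨y, hxy⟩
    by_cases hr : (x, y) ∈ R
    · obtain ⟨i, hi, he⟩ := (hRmem _).mp hr
      have hx : x = a (i + 1) := congrArg Prod.fst he
      rcases Nat.lt_or_ge (i + 1) k with h | h
      · exact ⟨yf (i + 1), Finset.mem_union_right _ ((hPmem _).mpr ⟨i + 1, h, by rw [hx]⟩)⟩
      · have : i + 1 = k := by omega
        exact absurd (hx ▸ hxM) (this ▸ hkspec)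
    · exact ⟨y, Finset.mem_union_left _ (Finset.mem_sdiff.mpr ⟨hxy, hr⟩)⟩


lemma card_le (E : X → Y → Prop) (N : Finset (X × Y)) (hN : IsBipMatching E N) :
    N.card ≤ Fintype.card Y := by
  calc N.card = (N.image Prod.snd).card := by
        rw [Finset.card_image_of_injOn]
        intro p hp q hq h
        exact hN.2.2 p hp q hq h
    _ ≤ Fintype.card Y := by
        simpa using Finset.card_le_card (Finset.subset_univ (N.image Prod.snd))

lemma card_sat (E : X → Y → Prop) (N : Finset (X × Y)) (hN : IsBipMatching E N)
    (hsatN : ∀ y : Y, ∃ x : X, (x, y) ∈ N) : N.card = Fintype.card Y := by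
  have himg : N.image Prod.snd = Finset.univ := by
    apply Finset.eq_univ_of_forall
    intro y
    obtain ⟨x, hx⟩ := hsatN y
    exact Finset.mem_image.mpr ⟨(x, y), hx, rfl⟩
  calc N.card = (N.image Prod.snd).card := by
        rw [Finset.card_image_of_injOn]
        intro p hp q hq h
        exact hN.2.2 p hp q hq h
    _ = Fintype.card Y := by rw [himg, Finset.card_univ]


end Stmt10Aux



/-- If a finite bipartite graph `B = (X, Y, E)` has a matching saturating `Y`,
then for any matching `M` there is a maximum matching `M*` such that every
vertex of `X` matched by `M` is also matched by `M*`. -/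
theorem stmt10 {X Y : Type*} [Fintype X] [Fintype Y] [DecidableEq X] [DecidableEq Y]
    (E : X → Y → Prop) (M : Finset (X × Y)) (hM : IsBipMatching E M)
    (hsat : ∃ N : Finset (X × Y), IsBipMatching E N ∧ ∀ y : Y, ∃ x : X, (x, y) ∈ N) :
    ∃ Mstar : Finset (X × Y), IsBipMatching E Mstar ∧
      (∀ N : Finset (X × Y), IsBipMatching E N → N.card ≤ Mstar.card) ∧
      ∀ x : X, (∃ y, (x, y) ∈ M) → ∃ y, (x, y) ∈ Mstar := by
  classical
  set S : Finset X := M.image Prod.fst with hS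
  set T : Finset (Finset (X × Y)) :=
    Finset.univ.filter (fun N => IsBipMatching E N ∧ ∀ y : Y, ∃ x : X, (x, y) ∈ N) with hT
  have hTmem : ∀ N, N ∈ T ↔ IsBipMatching E N ∧ ∀ y : Y, ∃ x : X, (x, y) ∈ N := by
    intro N; simp [hT]
  have hTne : T.Nonempty := by
    obtain ⟨N, hN1, hN2⟩ := hsat
    exact ⟨N, (hTmem N).mpr ⟨hN1, hN2⟩⟩
  obtain ⟨Nm, hNmT, hmax⟩ := T.exists_max_image
    (fun N => (S.filter (fun x => ∃ y, (x, y) ∈ N)).card) hTne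
  obtain ⟨hNm, hNmsat⟩ := (hTmem Nm).mp hNmT
  have hcov : ∀ x ∈ S, ∃ y, (x, y) ∈ Nm := by
    by_contra hc
    push_neg at hc
    obtain ⟨x0, hx0S, hx0N⟩ := hc
    have hx0M : ∃ y, (x0, y) ∈ M := by
      obtain ⟨p, hp, hpe⟩ := Finset.mem_image.mp hx0S
      exact ⟨p.2, by rwa [← hpe, Prod.mk.eta]⟩
    obtain ⟨N', hN'1, hN'2, hN'3, hN'4⟩ :=
      Stmt10Aux.augment E M Nm hM hNm hNmsat x0 hx0M (fun ⟨y, hy⟩ => hx0N y hy)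
    have hN'T : N' ∈ T := (hTmem N').mpr ⟨hN'1, hN'2⟩
    have hsub : S.filter (fun x => ∃ y, (x, y) ∈ Nm) ⊂ S.filter (fun x => ∃ y, (x, y) ∈ N') := by
      constructor
      · intro x hx
        rw [Finset.mem_filter] at hx ⊢
        refine ⟨hx.1, ?_⟩
        have hxM : ∃ y, (x, y) ∈ M := by
          obtain ⟨p, hp, hpe⟩ := Finset.mem_image.mp hx.1
          exact ⟨p.2, by rwa [← hpe, Prod.mk.eta]⟩
        exact hN'4 x hxM hx.2
      · intro hsub'
        have : x0 ∈ S.filter (fun x => ∃ y, (x, y) ∈ Nm) :=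
          hsub' (Finset.mem_filter.mpr ⟨hx0S, hN'3⟩)
        obtain ⟨y, hy⟩ := (Finset.mem_filter.mp this).2
        exact hx0N y hy
    have := Finset.card_lt_card hsub
    have := hmax N' hN'T
    omega
  refine ⟨Nm, hNm, ?_, ?_⟩
  · intro N hN
    calc N.card ≤ Fintype.card Y := Stmt10Aux.card_le E N hN
      _ = Nm.card := (Stmt10Aux.card_sat E Nm hNm hNmsat).symm
  · intro x ⟨y, hxy⟩
    exact hcov x (Finset.mem_image.mpr ⟨(x, y), hxy, rfl⟩)
end

section
/- Let a₁ ≥ a₂ ≥ … ≥ a_k be positive integers, ℓ ≥ 1, and suppose p ≥ 1 satisfies Σᵢ min(p, aᵢ) ≥ pℓ but Σᵢ min(p+1, aᵢ) < (p+1)ℓ. Set n = Σᵢ aᵢ and q = Σᵢ max(0, aᵢ − p). Then no subset of the points of size > n − q admits an ℓ-diverse clustering; i.e., at least q points must be deleted to obtain a feasible instance. -/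
open Finset

/-- With color class sizes `a₁ ≥ … ≥ a_k` and `p` maximal with
`Σᵢ min(p,aᵢ) ≥ pℓ`, set `q = Σᵢ max(0, aᵢ − p)`.  Then at least `q` points
must be deleted to obtain a feasible instance: any deletion amounts
`dᵢ ≤ aᵢ` after which every color occurs at most `⌊(remaining)/ℓ⌋` times
satisfy `Σᵢ dᵢ ≥ q`. -/
theorem stmt15 (k : ℕ) (a : Fin k → ℕ) (hpos : ∀ i, 0 < a i)
    (hsorted : ∀ i j : Fin k, i ≤ j → a j ≤ a i)
    (ℓ : ℕ) (hℓ : 1 ≤ ℓ) (p : ℕ) (hp : 1 ≤ p)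
    (hp1 : p * ℓ ≤ ∑ i, min p (a i))
    (hp2 : ∑ i, min (p + 1) (a i) < (p + 1) * ℓ)
    (d : Fin k → ℕ) (hd : ∀ i, d i ≤ a i)
    (hfeas : ∀ i, a i - d i ≤ (∑ j, (a j - d j)) / ℓ) :
    ∑ i, (a i - p) ≤ ∑ i, d i := by
  set r : Fin k → ℕ := fun i => a i - d i with hr
  set S : ℕ := ∑ j, r j with hS
  set m : ℕ := S / ℓ with hm
  have hmS : m * ℓ ≤ S := Nat.div_mul_le_self S ℓ
  -- key: S ≤ ∑ min(p, a i)
  have hkey : S ≤ ∑ i, min p (a i) := by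
    by_cases hmp : m ≤ p
    · apply Finset.sum_le_sum
      intro i _
      exact le_trans (le_min (hfeas i) (Nat.sub_le _ _)) (min_le_min hmp le_rfl)
    · exfalso
      push_neg at hmp
      -- S ≤ ∑ min(m, a i)
      have hSm : S ≤ ∑ i, min m (a i) := by
        apply Finset.sum_le_sum
        intro i _
        exact le_min (hfeas i) (Nat.sub_le _ _)
      -- per-element: min m a ≤ min (p+1) a + (m - (p+1)) * (min (p+1) a - min p a)
      have hper : ∀ i : Fin k,
          min m (a i) ≤ min (p+1) (a i) + (m - (p+1)) * (min (p+1) (a i) - min p (a i)) := by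
        intro i
        rcases le_or_gt (a i) p with h | h
        · simp only [min_def]
          split_ifs <;> omega
        · have h1 : min p (a i) = p := by omega
          have h2 : min (p+1) (a i) = p+1 := by omega
          rw [h1, h2]
          have h3 : p + 1 - p = 1 := by omega
          rw [h3, mul_one]
          have : min m (a i) ≤ m := min_le_left _ _
          omega
      have hsum : ∑ i, min m (a i) ≤
          ∑ i, (min (p+1) (a i) + (m - (p+1)) * (min (p+1) (a i) - min p (a i))) :=
        Finset.sum_le_sum fun i _ => hper i
      rw [Finset.sum_add_distrib, ← Finset.mul_sum] at hsum
      have hdiff : ∑ i, (min (p+1) (a i) - min p (a i)) =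
          (∑ i, min (p+1) (a i)) - ∑ i, min p (a i) := by
        rw [eq_comm, Nat.sub_eq_iff_eq_add
          (Finset.sum_le_sum fun i _ => min_le_min (Nat.le_succ p) le_rfl),
          ← Finset.sum_add_distrib]
        apply Finset.sum_congr rfl
        intro i _
        simp only [min_def]
        split_ifs <;> omega
      rw [hdiff] at hsum
      -- numeric contradiction
      have hA : ∑ i, min p (a i) ≥ p * ℓ := hp1
      have hB : ∑ i, min (p+1) (a i) < (p+1) * ℓ := hp2
      have hd1 : (∑ i, min (p+1) (a i)) - ∑ i, min p (a i) ≤ ℓ - 1 := by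
        have hx : (p+1) * ℓ = p * ℓ + ℓ := by ring
        omega
      have hfin : ∑ i, min m (a i) < m * ℓ := by
        calc ∑ i, min m (a i)
            ≤ (∑ i, min (p+1) (a i)) + (m-(p+1)) * ((∑ i, min (p+1) (a i)) - ∑ i, min p (a i)) := hsum
          _ ≤ (p+1) * ℓ - 1 + (m-(p+1)) * (ℓ-1) := by
              have := Nat.mul_le_mul_left (m-(p+1)) hd1
              omega
          _ < m * ℓ := by
              have h1 : (m-(p+1)) * (ℓ-1) ≤ (m-(p+1)) * ℓ := Nat.mul_le_mul_left _ (by omega)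
              have h2 : (p+1) * ℓ + (m-(p+1)) * ℓ = m * ℓ := by
                rw [← Nat.add_mul]; congr 1; omega
              omega
      omega
  -- now finish
  have hda : ∑ i, d i = (∑ i, a i) - S := by
    rw [hS, hr, eq_comm, Nat.sub_eq_iff_eq_add (Finset.sum_le_sum fun i _ => Nat.sub_le _ _),
      ← Finset.sum_add_distrib]
    apply Finset.sum_congr rfl
    intro i _
    have := hd i
    omega
  have hap : ∑ i, (a i - p) + ∑ i, min p (a i) = ∑ i, a i := by
    rw [← Finset.sum_add_distrib]
    apply Finset.sum_congr rfl
    intro i _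
    simp only [min_def]
    split_ifs <;> omega
  rw [hda]
  omega
end

section
/- Given a set of points colored with exactly two colors in a metric space, the minimum over feasible 2-diverse clusterings of the maximum cluster diameter equals the minimum value w such that the bipartite graph between the two color classes, with edges between points at distance ≤ w, has a perfect matching — provided the two color classes have equal size. -/
open Finset Function

/-!
Clusters of size at least two on which two colors are injective are exactly the pairs
`{v, g v}` for an involution `g` exchanging the colors, and such involutions are exactly the
bijections between the two color classes. Since the diameter of `{v, g v}` is `dist v (g v)`,
both problems have the same set of feasible bounds `w`, hence the same minimum.
-/

section Involution

variable {V : Type*} {c : V → Bool}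

def matchingInvolution (f : {v // c v = true} ≃ {v // c v = false}) (v : V) : V :=
  if h : c v = true then f ⟨v, h⟩ else f.symm ⟨v, by simpa using h⟩

lemma color_matchingInvolution (f : {v // c v = true} ≃ {v // c v = false}) (v : V) :
    c (matchingInvolution f v) = !c v := by
  unfold matchingInvolution
  split_ifs with h
  · simp [(f _).2, h]
  · simp [(f.symm _).2, h]

lemma matchingInvolution_involutive (f : {v // c v = true} ≃ {v // c v = false}) :
    Involutive (matchingInvolution f) := by
  intro v
  unfold matchingInvolution
  split_ifs with h h' h'
  · simp [(f _).2] at h'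
  · simp
  · simp
  · simp [(f.symm _).2] at h'

lemma dist_matchingInvolution_le [PseudoMetricSpace V]
    {f : {v // c v = true} ≃ {v // c v = false}} {w : ℝ}
    (hf : ∀ v, dist v.1 (f v).1 ≤ w) (v : V) : dist v (matchingInvolution f v) ≤ w := by
  unfold matchingInvolution
  split_ifs with h
  · exact hf ⟨v, h⟩
  · simpa [dist_comm] using hf (f.symm ⟨v, by simpa using h⟩)

def equivOfInvolutive {g : V → V} (hg : Involutive g) (hc : ∀ v, c (g v) = !c v) :
    {v // c v = true} ≃ {v // c v = false} where
  toFun v := ⟨g v, by simp [hc, v.2]⟩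
  invFun v := ⟨g v, by simp [hc, v.2]⟩
  left_inv v := Subtype.ext (hg v)
  right_inv v := Subtype.ext (hg v)

def Function.Involutive.orbitSetoid {g : V → V} (hg : Involutive g) : Setoid V where
  r u w := w = u ∨ w = g u
  iseqv.refl u := .inl rfl
  iseqv.symm := by
    rintro u w (rfl | rfl)
    · exact .inl rfl
    · exact .inr (hg u).symm
  iseqv.trans := by
    rintro u v w (rfl | rfl) (rfl | rfl)
    · exact .inl rfl
    · exact .inr rfl
    · exact .inr rfl
    · exact .inl (hg u)

variable [Fintype V] [DecidableEq V]

instance {g : V → V} (hg : Involutive g) : DecidableRel hg.orbitSetoid.r :=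
  fun u w => inferInstanceAs (Decidable (w = u ∨ w = g u))

def Function.Involutive.orbitPartition {g : V → V} (hg : Involutive g) :
    Finpartition (univ : Finset V) :=
  Finpartition.ofSetoid hg.orbitSetoid

lemma Function.Involutive.part_orbitPartition {g : V → V} (hg : Involutive g) (v : V) :
    hg.orbitPartition.part v = {v, g v} := by
  ext u
  rw [orbitPartition, Finpartition.mem_part_ofSetoid_iff_rel, mem_insert, mem_singleton]
  rfl

lemma Finpartition.exists_involutive_of_injOn {P : Finpartition (univ : Finset V)}
    (hP : ∀ p ∈ P.parts, 2 ≤ #p ∧ Set.InjOn c p) :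
    ∃ g : V → V, Involutive g ∧ ∀ v, g v ∈ P.part v ∧ c (g v) = !c v := by
  have hpart (v : V) : P.part v ∈ P.parts := P.part_mem.2 (mem_univ v)
  have hpartner (v : V) : ∃ u ∈ P.part v, c u = !c v := by
    obtain ⟨u, hu, hne⟩ := exists_mem_ne (hP _ (hpart v)).1 v
    refine ⟨u, hu, Bool.eq_not_iff.2 fun h => hne ?_⟩
    exact (hP _ (hpart v)).2 hu (P.mem_part (mem_univ v)) h
  choose g hg hc using hpartner
  refine ⟨g, fun v => ?_, fun v => ⟨hg v, hc v⟩⟩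
  have hsame : P.part (g v) = P.part v := P.part_eq_of_mem (hpart v) (hg v)
  have hgg : g (g v) ∈ P.part v := hsame ▸ hg (g v)
  exact (hP _ (hpart v)).2 hgg (P.mem_part (mem_univ v)) (by simp [hc])

end Involution

section Metric

variable {V : Type*} [Fintype V] [DecidableEq V] [PseudoMetricSpace V] {c : V → Bool} {w : ℝ}

lemma exists_equiv_dist_le_of_finpartition {P : Finpartition (univ : Finset V)}
    (hP : ∀ p ∈ P.parts, (2 ≤ #p ∧ Set.InjOn c p) ∧ ∀ u ∈ p, ∀ v ∈ p, dist u v ≤ w) :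
    ∃ f : {v // c v = true} ≃ {v // c v = false}, ∀ v, dist v.1 (f v).1 ≤ w := by
  obtain ⟨g, hg, hgP⟩ := P.exists_involutive_of_injOn fun p hp => (hP p hp).1
  refine ⟨equivOfInvolutive hg fun v => (hgP v).2, fun v => ?_⟩
  exact (hP _ (P.part_mem.2 (mem_univ _))).2 _ (P.mem_part (mem_univ _)) _ (hgP v).1

lemma exists_finpartition_of_equiv_dist_le {f : {v // c v = true} ≃ {v // c v = false}}
    (hf : ∀ v, dist v.1 (f v).1 ≤ w) :
    ∃ P : Finpartition (univ : Finset V),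
      ∀ p ∈ P.parts, (2 ≤ #p ∧ Set.InjOn c p) ∧ ∀ u ∈ p, ∀ v ∈ p, dist u v ≤ w := by
  set g := matchingInvolution f
  have hg : Involutive g := matchingInvolution_involutive f
  have hdist : ∀ v, dist v (g v) ≤ w := dist_matchingInvolution_le hf
  refine ⟨hg.orbitPartition, fun p hp => ?_⟩
  obtain ⟨v, -, rfl⟩ := hg.orbitPartition.part_surjOn hp
  have hcolor : c (g v) ≠ c v := by simp [g, color_matchingInvolution]
  have hne : v ≠ g v := fun h => hcolor (congrArg c h).symm
  rw [hg.part_orbitPartition]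
  refine ⟨⟨(card_pair hne).ge, ?_⟩, ?_⟩
  · rw [coe_pair, Set.injOn_pair]
    exact fun h => absurd h.symm hcolor
  have hw : 0 ≤ w := dist_nonneg.trans (hdist v)
  simp only [mem_insert, mem_singleton]
  rintro x (rfl | rfl) y (rfl | rfl)
  · simpa using hw
  · exact hdist x
  · simpa [dist_comm] using hdist y
  · simpa using hw

end Metric

theorem stmt18_general {V : Type*} [Fintype V] [DecidableEq V] [MetricSpace V]
    (c : V → Bool)
    (a b : ℝ)
    (ha : IsLeast {w : ℝ | ∃ P : Finpartition (Finset.univ : Finset V),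
        ∀ p ∈ P.parts, (2 ≤ p.card ∧ Set.InjOn c ↑p) ∧
          ∀ u ∈ p, ∀ v ∈ p, dist u v ≤ w} a)
    (hb : IsLeast {w : ℝ | ∃ f : {v : V // c v = true} ≃ {v : V // c v = false},
        ∀ v : {v : V // c v = true}, dist v.1 (f v).1 ≤ w} b) :
    a = b := by
  have hsets : {w : ℝ | ∃ P : Finpartition (Finset.univ : Finset V),
        ∀ p ∈ P.parts, (2 ≤ p.card ∧ Set.InjOn c ↑p) ∧ ∀ u ∈ p, ∀ v ∈ p, dist u v ≤ w} =
      {w : ℝ | ∃ f : {v : V // c v = true} ≃ {v : V // c v = false},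
        ∀ v : {v : V // c v = true}, dist v.1 (f v).1 ≤ w} := by
    ext w
    exact ⟨fun ⟨_, hP⟩ => exists_equiv_dist_le_of_finpartition hP,
      fun ⟨_, hf⟩ => exists_finpartition_of_equiv_dist_le hf⟩
  exact ha.unique (hsets ▸ hb)

/-- With exactly two colors of equal class sizes, the minimum over feasible
2-diverse clusterings of the maximum cluster diameter equals the minimum `w`
such that the bipartite graph between the color classes with edges of length
`≤ w` has a perfect matching. -/
theorem stmt18 {V : Type*} [Fintype V] [DecidableEq V] [MetricSpace V]
    (c : V → Bool)
    (hsize : (Finset.univ.filter (fun v => c v = true)).card =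
             (Finset.univ.filter (fun v => c v = false)).card)
    (a b : ℝ)
    (ha : IsLeast {w : ℝ | ∃ P : Finpartition (Finset.univ : Finset V),
        ∀ p ∈ P.parts, (2 ≤ p.card ∧ Set.InjOn c ↑p) ∧
          ∀ u ∈ p, ∀ v ∈ p, dist u v ≤ w} a)
    (hb : IsLeast {w : ℝ | ∃ f : {v : V // c v = true} ≃ {v : V // c v = false},
        ∀ v : {v : V // c v = true}, dist v.1 (f v).1 ≤ w} b) :
    a = b :=
  stmt18_general c a b ha hb
end
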